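/- arXiv:2508.10882 — 5 statements merged into one kernel-verified Lean document; each statement's English description precedes it below -/
import Mathlib

section
/- Let A be a G-bigraded bialgebra over a field F, i.e. a bialgebra that is G × G-graded as an algebra with Δ(A_{α,β}) ⊆ Σ_γ A_{α,γ} ⊗ A_{-γ,β} and ε(A_{α,β}) = 0 whenever α + β ≠ 0. Let ζ : G × G → F^* be a skew bicharacter and let A_ζ denote the algebra obtained by twisting the multiplication: a ∘ b = ζ(α,α')ζ(β,β')^{-1} ab for a ∈ A_{α,β}, b ∈ A_{α',β'}. Then A_ζ, equipped with the same coproduct Δ and counit ε as A, is a bialgebra; in particular Δ : A_ζ → A_ζ ⊗ A_ζ and ε : A_ζ → F are algebra homomorphisms for the twisted product. -/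
open TensorProduct

/-! On homogeneous pieces the twisted product is the old one times `ζ(α,α') ζ(β,β')⁻¹`. For pure
tensors `p ⊗ q ∈ A_{α,γ} ⊗ A_{-γ,β}` and `r ⊗ s ∈ A_{α',γ'} ⊗ A_{-γ',β'}` the twisted product of
`A ⊗ A` picks up `ζ(α,α') ζ(γ,γ')⁻¹ · ζ(-γ,-γ') ζ(β,β')⁻¹`, and the inner factors cancel since
`ζ(-γ,-γ') = ζ(γ,γ')`; so `Δ (a ∘ b) = Δ a ∘ Δ b` for homogeneous `a, b`. The counit of `a b` can
only be nonzero when `β = -α` and `β' = -α'`, where the scalar is `ζ(α,α') ζ(-α,-α')⁻¹ = 1`.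
Bilinearity extends both identities from homogeneous elements to all of `A`. -/

lemma LinearMap.eqOn_span₂ {R M N P : Type*} [CommSemiring R] [AddCommMonoid M] [Module R M]
    [AddCommMonoid N] [Module R N] [AddCommMonoid P] [Module R P]
    {f g : M →ₗ[R] N →ₗ[R] P} {s : Set M} {t : Set N}
    (h : ∀ m ∈ s, ∀ n ∈ t, f m n = g m n) {m : M} {n : N}
    (hm : m ∈ Submodule.span R s) (hn : n ∈ Submodule.span R t) : f m n = g m n :=
  LinearMap.eqOn_span (f := f m) (g := g m)
    (fun n hn' => LinearMap.eqOn_span (f := f.flip n) (g := g.flip n)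
      (fun m hm' => h m hm' n hn') hm) hn

lemma LinearMap.ext₂_of_iSup_eq_top {R M N P ι κ : Type*} [CommSemiring R] [AddCommMonoid M]
    [Module R M] [AddCommMonoid N] [Module R N] [AddCommMonoid P] [Module R P]
    {p : ι → Submodule R M} {q : κ → Submodule R N} (hp : iSup p = ⊤) (hq : iSup q = ⊤)
    {f g : M →ₗ[R] N →ₗ[R] P} (h : ∀ i j, ∀ m ∈ p i, ∀ n ∈ q j, f m n = g m n) : f = g := by
  rw [Submodule.iSup_eq_span] at hp hq
  refine LinearMap.ext₂ fun m n => LinearMap.eqOn_span₂ ?_ (hp ▸ Submodule.mem_top)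
    (hq ▸ Submodule.mem_top)
  simp only [Set.mem_iUnion, SetLike.mem_coe]
  rintro m ⟨i, hm⟩ n ⟨j, hn⟩
  exact h i j m hm n hn

lemma TensorProduct.iSup_range_map_subtype_eq_span {R M N ι : Type*} [CommSemiring R]
    [AddCommMonoid M] [Module R M] [AddCommMonoid N] [Module R N]
    (p : ι → Submodule R M) (q : ι → Submodule R N) :
    ⨆ i, LinearMap.range (TensorProduct.map (p i).subtype (q i).subtype)
      = Submodule.span R (⋃ i, Set.image2 (· ⊗ₜ[R] ·) (p i : Set M) (q i : Set N)) := by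
  simp_rw [TensorProduct.range_map, Submodule.range_subtype, Submodule.map₂_eq_span_image2,
    Submodule.iSup_span]
  rfl

lemma apply_neg_of_map_add {G M : Type*} [AddGroup G] [Group M] {f : G → M}
    (hf : ∀ a b, f (a + b) = f a * f b) (a : G) : f (-a) = (f a)⁻¹ :=
  map_inv (MonoidHom.mk' (fun x : Multiplicative G => f x.toAdd) fun _ _ => hf _ _)
    (Multiplicative.ofAdd a)

section Twist

variable {G F A : Type*} [AddGroup G] [CommSemiring F] [Semiring A]
  {ζ : G → G → Fˣ}

lemma bicharacter_neg_neg (hζadd₁ : ∀ α β γ, ζ (α + β) γ = ζ α γ * ζ β γ)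
    (hζadd₂ : ∀ α β γ, ζ α (β + γ) = ζ α β * ζ α γ) (α γ : G) : ζ (-α) (-γ) = ζ α γ := by
  rw [apply_neg_of_map_add (f := fun a => ζ a (-γ)) (fun a b => hζadd₁ a b _),
    apply_neg_of_map_add (hζadd₂ α), inv_inv]

section Algebra

variable [Algebra F A] {𝒜 : G × G → Submodule F A} {mul : A →ₗ[F] A →ₗ[F] A}
  {mulT : (A ⊗[F] A) →ₗ[F] (A ⊗[F] A) →ₗ[F] (A ⊗[F] A)}

lemma twistedMulT_tmul_tmul (hζadd₁ : ∀ α β γ, ζ (α + β) γ = ζ α γ * ζ β γ)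
    (hζadd₂ : ∀ α β γ, ζ α (β + γ) = ζ α β * ζ α γ)
    (hmul : ∀ (α β α' β' : G) (a b : A), a ∈ 𝒜 (α, β) → b ∈ 𝒜 (α', β') →
      mul a b = ((ζ α α' * (ζ β β')⁻¹ : Fˣ) : F) • (a * b))
    (hmulT : ∀ a b c d : A, mulT (a ⊗ₜ[F] c) (b ⊗ₜ[F] d) = (mul a b) ⊗ₜ[F] (mul c d))
    {α β γ α' β' γ' : G} {p q r s : A}
    (hp : p ∈ 𝒜 (α, γ)) (hq : q ∈ 𝒜 (-γ, β)) (hr : r ∈ 𝒜 (α', γ')) (hs : s ∈ 𝒜 (-γ', β')) :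
    mulT (p ⊗ₜ q) (r ⊗ₜ s) = ((ζ α α' * (ζ β β')⁻¹ : Fˣ) : F) • ((p ⊗ₜ q) * (r ⊗ₜ s)) := by
  rw [hmulT, hmul _ _ _ _ p r hp hr, hmul _ _ _ _ q s hq hs, Algebra.TensorProduct.tmul_mul_tmul,
    smul_tmul_smul, ← Units.val_mul, bicharacter_neg_neg hζadd₁ hζadd₂,
    mul_assoc, inv_mul_cancel_left]

end Algebra

section Bialgebra

variable [Bialgebra F A] {𝒜 : G × G → Submodule F A} {mul : A →ₗ[F] A →ₗ[F] A}
  {mulT : (A ⊗[F] A) →ₗ[F] (A ⊗[F] A) →ₗ[F] (A ⊗[F] A)}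

lemma comul_twistedMul_of_mem
    (hΔ : ∀ (α β : G) (x : A), x ∈ 𝒜 (α, β) →
      Coalgebra.comul (R := F) x ∈
        ⨆ γ : G, LinearMap.range
          (TensorProduct.map (𝒜 (α, γ)).subtype (𝒜 (-γ, β)).subtype))
    (hζadd₁ : ∀ α β γ, ζ (α + β) γ = ζ α γ * ζ β γ)
    (hζadd₂ : ∀ α β γ, ζ α (β + γ) = ζ α β * ζ α γ)
    (hmul : ∀ (α β α' β' : G) (a b : A), a ∈ 𝒜 (α, β) → b ∈ 𝒜 (α', β') →
      mul a b = ((ζ α α' * (ζ β β')⁻¹ : Fˣ) : F) • (a * b))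
    (hmulT : ∀ a b c d : A, mulT (a ⊗ₜ[F] c) (b ⊗ₜ[F] d) = (mul a b) ⊗ₜ[F] (mul c d))
    {α β α' β' : G} {a b : A} (ha : a ∈ 𝒜 (α, β)) (hb : b ∈ 𝒜 (α', β')) :
    Coalgebra.comul (R := F) (mul a b)
      = mulT (Coalgebra.comul (R := F) a) (Coalgebra.comul (R := F) b) := by
  have hΔa := hΔ α β a ha
  have hΔb := hΔ α' β' b hb
  rw [iSup_range_map_subtype_eq_span] at hΔa hΔb
  rw [hmul _ _ _ _ a b ha hb, map_smul, Bialgebra.comul_mul]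
  refine LinearMap.eqOn_span₂ (g := mulT)
    (f := ((ζ α α' * (ζ β β')⁻¹ : Fˣ) : F) • LinearMap.mul F (A ⊗[F] A)) ?_ hΔa hΔb
  simp only [Set.mem_iUnion]
  rintro _ ⟨γ, p, hp, q, hq, rfl⟩ _ ⟨γ', r, hr, s, hs, rfl⟩
  exact (twistedMulT_tmul_tmul hζadd₁ hζadd₂ hmul hmulT hp hq hr hs).symm

lemma counit_twistedMul_of_mem
    (hε : ∀ (α β : G) (x : A), x ∈ 𝒜 (α, β) → α + β ≠ 0 →
      Coalgebra.counit (R := F) x = 0)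
    (hζadd₁ : ∀ α β γ, ζ (α + β) γ = ζ α γ * ζ β γ)
    (hζadd₂ : ∀ α β γ, ζ α (β + γ) = ζ α β * ζ α γ)
    (hmul : ∀ (α β α' β' : G) (a b : A), a ∈ 𝒜 (α, β) → b ∈ 𝒜 (α', β') →
      mul a b = ((ζ α α' * (ζ β β')⁻¹ : Fˣ) : F) • (a * b))
    {α β α' β' : G} {a b : A} (ha : a ∈ 𝒜 (α, β)) (hb : b ∈ 𝒜 (α', β')) :
    Coalgebra.counit (R := F) (mul a b)
      = Coalgebra.counit (R := F) a * Coalgebra.counit (R := F) b := by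
  rw [hmul _ _ _ _ a b ha hb, map_smul, Bialgebra.counit_mul]
  by_cases h : α + β = 0 ∧ α' + β' = 0
  · obtain ⟨rfl, rfl⟩ : β = -α ∧ β' = -α' :=
      ⟨eq_neg_of_add_eq_zero_right h.1, eq_neg_of_add_eq_zero_right h.2⟩
    rw [bicharacter_neg_neg hζadd₁ hζadd₂, mul_inv_cancel, Units.val_one, one_smul]
  · rcases not_and_or.mp h with h | h
    · simp [hε _ _ a ha h]
    · simp [hε _ _ b hb h]

end Bialgebra

end Twist

theorem stmt2_general {G F A : Type*} [AddCommGroup G] [DecidableEq G]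
    [Field F] [Ring A] [Bialgebra F A]
    (𝒜 : G × G → Submodule F A) [GradedAlgebra 𝒜]
    (hΔ : ∀ (α β : G) (x : A), x ∈ 𝒜 (α, β) →
      Coalgebra.comul (R := F) x ∈
        ⨆ γ : G, LinearMap.range
          (TensorProduct.map (𝒜 (α, γ)).subtype (𝒜 (-γ, β)).subtype))
    (hε : ∀ (α β : G) (x : A), x ∈ 𝒜 (α, β) → α + β ≠ 0 →
      Coalgebra.counit (R := F) x = 0)
    (ζ : G → G → Fˣ)
    (hζadd₁ : ∀ α β γ, ζ (α + β) γ = ζ α γ * ζ β γ)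
    (hζadd₂ : ∀ α β γ, ζ α (β + γ) = ζ α β * ζ α γ)
    (mul : A →ₗ[F] A →ₗ[F] A)
    (hmul : ∀ (α β α' β' : G) (a b : A), a ∈ 𝒜 (α, β) → b ∈ 𝒜 (α', β') →
      mul a b = ((ζ α α' * (ζ β β')⁻¹ : Fˣ) : F) • (a * b))
    (mulT : (A ⊗[F] A) →ₗ[F] (A ⊗[F] A) →ₗ[F] (A ⊗[F] A))
    (hmulT : ∀ a b c d : A,
      mulT (a ⊗ₜ[F] c) (b ⊗ₜ[F] d) = (mul a b) ⊗ₜ[F] (mul c d)) :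
    (∀ a b : A, Coalgebra.comul (R := F) (mul a b)
        = mulT (Coalgebra.comul (R := F) a) (Coalgebra.comul (R := F) b)) ∧
    (∀ a b : A, Coalgebra.counit (R := F) (mul a b)
        = Coalgebra.counit (R := F) a * Coalgebra.counit (R := F) b) ∧
    Coalgebra.comul (R := F) (1 : A) = (1 : A) ⊗ₜ[F] (1 : A) ∧
    Coalgebra.counit (R := F) (1 : A) = (1 : F) := by
  have h𝒜 : iSup 𝒜 = ⊤ := (DirectSum.Decomposition.isInternal 𝒜).submodule_iSup_eq_top
  refine ⟨fun a b => ?_, fun a b => ?_, Bialgebra.comul_one, Bialgebra.counit_one⟩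
  · refine LinearMap.congr_fun₂ (LinearMap.ext₂_of_iSup_eq_top h𝒜 h𝒜
      (f := mul.compr₂ (Coalgebra.comul (R := F)))
      (g := mulT.compl₁₂ (Coalgebra.comul (R := F)) (Coalgebra.comul (R := F)))
      fun i j a ha b hb => ?_) a b
    exact comul_twistedMul_of_mem hΔ hζadd₁ hζadd₂ hmul hmulT (α := i.1) (α' := j.1) ha hb
  · refine LinearMap.congr_fun₂ (LinearMap.ext₂_of_iSup_eq_top h𝒜 h𝒜
      (f := mul.compr₂ (Coalgebra.counit (R := F)))
      (g := (LinearMap.mul F F).compl₁₂ (Coalgebra.counit (R := F)) (Coalgebra.counit (R := F)))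
      fun i j a ha b hb => ?_) a b
    exact counit_twistedMul_of_mem hε hζadd₁ hζadd₂ hmul (α := i.1) (α' := j.1) ha hb

/-- the bicharacter twist of a `G`-bigraded bialgebra is again a
bialgebra: the (unchanged) coproduct and counit are algebra homomorphisms for
the twisted products. -/
theorem stmt2 {G F A : Type*} [AddCommGroup G] [DecidableEq G]
    [Field F] [Ring A] [Bialgebra F A]
    (𝒜 : G × G → Submodule F A) [GradedAlgebra 𝒜]
    (hΔ : ∀ (α β : G) (x : A), x ∈ 𝒜 (α, β) →
      Coalgebra.comul (R := F) x ∈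
        ⨆ γ : G, LinearMap.range
          (TensorProduct.map (𝒜 (α, γ)).subtype (𝒜 (-γ, β)).subtype))
    (hε : ∀ (α β : G) (x : A), x ∈ 𝒜 (α, β) → α + β ≠ 0 →
      Coalgebra.counit (R := F) x = 0)
    (ζ : G → G → Fˣ)
    (hζadd₁ : ∀ α β γ, ζ (α + β) γ = ζ α γ * ζ β γ)
    (hζadd₂ : ∀ α β γ, ζ α (β + γ) = ζ α β * ζ α γ)
    (hζskew : ∀ α β, ζ α β = (ζ β α)⁻¹)
    (hζdiag : ∀ α, ζ α α = 1)
    (mul : A →ₗ[F] A →ₗ[F] A)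
    (hmul : ∀ (α β α' β' : G) (a b : A), a ∈ 𝒜 (α, β) → b ∈ 𝒜 (α', β') →
      mul a b = ((ζ α α' * (ζ β β')⁻¹ : Fˣ) : F) • (a * b))
    (mulT : (A ⊗[F] A) →ₗ[F] (A ⊗[F] A) →ₗ[F] (A ⊗[F] A))
    (hmulT : ∀ a b c d : A,
      mulT (a ⊗ₜ[F] c) (b ⊗ₜ[F] d) = (mul a b) ⊗ₜ[F] (mul c d)) :
    (∀ a b : A, Coalgebra.comul (R := F) (mul a b)
        = mulT (Coalgebra.comul (R := F) a) (Coalgebra.comul (R := F) b)) ∧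
    (∀ a b : A, Coalgebra.counit (R := F) (mul a b)
        = Coalgebra.counit (R := F) a * Coalgebra.counit (R := F) b) ∧
    Coalgebra.comul (R := F) (1 : A) = (1 : A) ⊗ₜ[F] (1 : A) ∧
    Coalgebra.counit (R := F) (1 : A) = (1 : F) :=
  stmt2_general 𝒜 hΔ hε ζ hζadd₁ hζadd₂ mul hmul mulT hmulT
end

section
/- Let G be a group, F a field, H = F[G] the group algebra, and A an algebra over F that is an H–H-bimodule such that the left H-action makes A a left module-algebra over H and the right H-action makes A a right module-algebra over H. Then the formula (x ⊗ g)·(y ⊗ h) = (x·h)(g·y) ⊗ gh, for x,y ∈ A and g,h ∈ G, extended bilinearly, defines an associative unital algebra structure on A ⊗ H with unit 1_A ⊗ 1_G. -/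
/-! Both sides of each identity are linear in every argument, so it suffices to check them on the
spanning elements `x ⊗ g`. There associativity comes down to `r k (l g y) = l g (r k y)` together
with the multiplicativity of `l` and `r` and their (anti)homomorphism laws in `G`, and the unit laws
to `l 1 = r 1 = id`. -/

open TensorProduct MonoidAlgebra

namespace TensorProduct

variable {R A G M : Type*} [CommSemiring R] [AddCommMonoid A] [Module R A] [Monoid G]
  [AddCommMonoid M] [Module R M]

theorem ext_tmul_of {φ ψ : A ⊗[R] R[G] →ₗ[R] M}
    (H : ∀ x g, φ (x ⊗ₜ of R G g) = ψ (x ⊗ₜ of R G g)) : φ = ψ := by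
  ext x g
  exact H x g

theorem ext₂_tmul_of {φ ψ : A ⊗[R] R[G] →ₗ[R] A ⊗[R] R[G] →ₗ[R] M}
    (H : ∀ x g y h,
      φ (x ⊗ₜ of R G g) (y ⊗ₜ of R G h) = ψ (x ⊗ₜ of R G g) (y ⊗ₜ of R G h)) :
    φ = ψ :=
  ext_tmul_of fun x g => ext_tmul_of fun y h => H x g y h

theorem assoc_of_tmul_of
    (mul : A ⊗[R] R[G] →ₗ[R] A ⊗[R] R[G] →ₗ[R] A ⊗[R] R[G])
    (H : ∀ x y z g h k, mul (mul (x ⊗ₜ of R G g) (y ⊗ₜ of R G h)) (z ⊗ₜ of R G k)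
      = mul (x ⊗ₜ of R G g) (mul (y ⊗ₜ of R G h) (z ⊗ₜ of R G k)))
    (a b c : A ⊗[R] R[G]) : mul (mul a b) c = mul a (mul b c) := by
  have assoc_tmul_of_left :
      ∀ x g, mul ∘ₗ mul (x ⊗ₜ of R G g) = mul.compr₂ (mul (x ⊗ₜ of R G g)) :=
    fun x g => ext₂_tmul_of fun y h z k => H x y z g h k
  exact LinearMap.congr_fun (ext_tmul_of (φ := mul.flip c ∘ₗ mul.flip b)
    (ψ := mul.flip (mul b c)) fun x g => LinearMap.congr_fun₂ (assoc_tmul_of_left x g) b c) a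

end TensorProduct

/-- the crossed product multiplication
`(x ⊗ g)·(y ⊗ h) = (x·h)(g·y) ⊗ gh` on `A ⊗ F[G]` is associative with unit
`1 ⊗ 1`, when `A` is simultaneously a left and right module-algebra over
`F[G]` (equivalently, `G` acts on both sides by algebra endomorphisms,
the left action being a left action, the right action a right action,
and the two actions commute). -/
theorem stmt6 {G F A : Type*} [Group G] [Field F] [Ring A] [Algebra F A]
    (l r : G → (A →ₐ[F] A))
    (hl1 : l 1 = AlgHom.id F A)
    (hlmul : ∀ g h, l (g * h) = (l g).comp (l h))
    (hr1 : r 1 = AlgHom.id F A)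
    (hrmul : ∀ g h, r (g * h) = (r h).comp (r g))
    (hcomm : ∀ (g h : G) (a : A), l g (r h a) = r h (l g a))
    (mul : (A ⊗[F] MonoidAlgebra F G) →ₗ[F] (A ⊗[F] MonoidAlgebra F G) →ₗ[F]
      (A ⊗[F] MonoidAlgebra F G))
    (hmul : ∀ (x y : A) (g h : G),
      mul (x ⊗ₜ[F] MonoidAlgebra.of F G g) (y ⊗ₜ[F] MonoidAlgebra.of F G h)
        = (r h x * l g y) ⊗ₜ[F] MonoidAlgebra.of F G (g * h)) :
    (∀ a b c, mul (mul a b) c = mul a (mul b c)) ∧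
    (∀ a, mul ((1 : A) ⊗ₜ[F] (1 : MonoidAlgebra F G)) a = a) ∧
    (∀ a, mul a ((1 : A) ⊗ₜ[F] (1 : MonoidAlgebra F G)) = a) := by
  have one_eq_of : (1 : MonoidAlgebra F G) = of F G 1 := rfl
  refine ⟨assoc_of_tmul_of mul fun x y z g h k => ?_, fun a => ?_, fun a => ?_⟩
  · rw [hmul, hmul, hmul, hmul, mul_assoc g]
    congr 1
    simp only [hrmul, hlmul, AlgHom.comp_apply, map_mul, hcomm, mul_assoc]
  · refine LinearMap.congr_fun (ext_tmul_of (ψ := LinearMap.id) fun x g => ?_) a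
    rw [one_eq_of, hmul, hl1, map_one, one_mul, AlgHom.id_apply, one_mul, LinearMap.id_apply]
  · refine LinearMap.congr_fun
      (ext_tmul_of (φ := mul.flip _) (ψ := LinearMap.id) fun x g => ?_) a
    rw [one_eq_of, LinearMap.flip_apply, hmul, hr1, map_one, mul_one, AlgHom.id_apply, mul_one,
      LinearMap.id_apply]
end

section
/- Let G be an abelian group, F an algebraically closed field, A a G × G-graded algebra over F, and σ : G × G → F^* a skew bicharacter admitting square roots σ(g,h)^{1/2} chosen so that g ↦ σ(g,·)^{1/2} is a homomorphism in each variable. Make A an F[G]–F[G]-bimodule via e^g · x = σ(g, h+k)^{1/2} x and x · e^g = σ(h+k, g)^{1/2} x for x ∈ A_{h,k}, and equip A ⊗ F[G] with the crossed product multiplication (x ⊗ e^g)(y ⊗ e^{g'}) = (x·e^{g'})(e^g·y) ⊗ e^{g+g'}. Let A' = ⊕_{g,h ∈ G} A_{g,h} ⊗ e^{g-h} ⊆ A ⊗ F[G]. Then A' is a subalgebra, and the map φ : A → A', φ(x) = x ⊗ e^{g-h} for x ∈ A_{g,h}, is an algebra isomorphism from the twisted algebra A_σ (with product a ∘ b =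 σ(g,g')σ(h,h')^{-1} ab for a ∈ A_{g,h}, b ∈ A_{g',h'}) onto A'. -/
/-!
The twisting scalar is recovered from the half-twist `σh`: since `σh` is bimultiplicative and
`σh ^ 2 = σ`, one has `σh (g + h) (g' - h') * σh (g - h) (g' + h') = σ g g' * (σ h h')⁻¹`, which is
exactly the factor the crossed product produces on `(x ⊗ e^{g-h}) (y ⊗ e^{g'-h'})`. Hence `φ` is
multiplicative on homogeneous elements, and so everywhere by bilinearity. Injectivity of `φ` comes
from reading off the coefficient of `e^{g-h}` in `φ x` and then its `(g, h)`-component, which is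
the `(g, h)`-component of `x`.
-/

open TensorProduct

theorem bimul_add_sub_mul_sub_add {G M : Type*} [AddCommGroup G] [CommGroup M] (f : G → G → M)
    (h₁ : ∀ a b c, f (a + b) c = f a c * f b c) (h₂ : ∀ a b c, f a (b + c) = f a b * f a c)
    (a b c d : G) :
    f (a + b) (c - d) * f (a - b) (c + d) = f a c ^ 2 / f b d ^ 2 := by
  let F : G →+ G →+ Additive M :=
    AddMonoidHom.mk' (fun x => AddMonoidHom.mk' (fun y => Additive.ofMul (f x y)) (h₂ x))
      fun x y => AddMonoidHom.ext fun z => h₁ x y z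
  have hF : F (a + b) (c - d) + F (a - b) (c + d) = 2 • F a c - 2 • F b d := by
    simp only [map_add, map_sub, AddMonoidHom.add_apply, AddMonoidHom.sub_apply]
    abel
  -- `hF` is the goal read in `Additive M`
  exact hF

theorem DirectSum.Decomposition.linearMap_ext₂ {ι κ R M N P : Type*} [DecidableEq ι]
    [DecidableEq κ] [CommSemiring R] [AddCommMonoid M] [AddCommMonoid N] [AddCommMonoid P]
    [Module R M] [Module R N] [Module R P] (𝒜 : ι → Submodule R M) (ℬ : κ → Submodule R N)
    [DirectSum.Decomposition 𝒜] [DirectSum.Decomposition ℬ] {B₁ B₂ : M →ₗ[R] N →ₗ[R] P}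
    (h : ∀ i j, ∀ x ∈ 𝒜 i, ∀ y ∈ ℬ j, B₁ x y = B₂ x y) : B₁ = B₂ := by
  refine LinearMap.ext fun x => LinearMap.ext fun y => ?_
  induction x using DirectSum.Decomposition.inductionOn 𝒜 with
  | zero => simp
  | add x x' hx hx' => simp only [map_add, LinearMap.add_apply, hx, hx']
  | homogeneous x =>
    induction y using DirectSum.Decomposition.inductionOn ℬ with
    | zero => simp
    | add y y' hy hy' => simp only [map_add, hy, hy']
    | homogeneous y => exact h _ _ x x.2 y y.2

section TensorCoeff

variable {R M G : Type*} [CommSemiring R] [AddCommMonoid M] [Module R M]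

variable (R M) in
noncomputable def tensorCoeff (d : G) : M ⊗[R] AddMonoidAlgebra R G →ₗ[R] M :=
  (TensorProduct.rid R M).toLinearMap ∘ₗ
    (Finsupp.lapply d ∘ₗ (AddMonoidAlgebra.coeffLinearEquiv R).toLinearMap).lTensor M

@[simp]
theorem tensorCoeff_tmul (d : G) (x : M) (p : AddMonoidAlgebra R G) :
    tensorCoeff R M d (x ⊗ₜ p) = p.coeff d • x := by
  simp [tensorCoeff]

variable {ι : Type*} [DecidableEq ι] (𝒜 : ι → Submodule R M) [DirectSum.Decomposition 𝒜]
  {deg : ι → G} {φ : M →ₗ[R] M ⊗[R] AddMonoidAlgebra R G}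

theorem decompose_tensorCoeff_deg
    (hφ : ∀ i, ∀ x ∈ 𝒜 i, φ x = x ⊗ₜ AddMonoidAlgebra.single (deg i) 1) (i : ι) (x : M) :
    (DirectSum.decompose 𝒜 (tensorCoeff R M (deg i) (φ x)) i : M) =
      DirectSum.decompose 𝒜 x i := by
  induction x using DirectSum.Decomposition.inductionOn 𝒜 with
  | zero => simp
  | add x x' hx hx' => simp only [map_add, DirectSum.decompose_add, DirectSum.add_apply,
      Submodule.coe_add, hx, hx']
  | @homogeneous j x =>
    rw [hφ j x x.2, tensorCoeff_tmul, DirectSum.decompose_smul, DFinsupp.smul_apply,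
      Submodule.coe_smul]
    by_cases hji : j = i
    · subst hji
      simp [AddMonoidAlgebra.coeff_single]
    · simp [DirectSum.of_eq_of_ne _ _ _ (Ne.symm hji)]

theorem injective_of_eq_tmul_single
    (hφ : ∀ i, ∀ x ∈ 𝒜 i, φ x = x ⊗ₜ AddMonoidAlgebra.single (deg i) 1) :
    Function.Injective φ := fun x y hxy =>
  (DirectSum.decompose 𝒜).injective <| DFinsupp.ext fun i => Subtype.ext <| by
    rw [← decompose_tensorCoeff_deg 𝒜 hφ, hxy, decompose_tensorCoeff_deg 𝒜 hφ]

theorem range_eq_span_of_eq_tmul_single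
    (hφ : ∀ i, ∀ x ∈ 𝒜 i, φ x = x ⊗ₜ AddMonoidAlgebra.single (deg i) 1) :
    LinearMap.range φ =
      Submodule.span R {t | ∃ i, ∃ x ∈ 𝒜 i, t = x ⊗ₜ AddMonoidAlgebra.single (deg i) 1} := by
  apply le_antisymm
  · rintro _ ⟨x, rfl⟩
    induction x using DirectSum.Decomposition.inductionOn 𝒜 with
    | zero => simp
    | add x x' hx hx' => simpa only [map_add] using add_mem hx hx'
    | @homogeneous i x => exact Submodule.subset_span ⟨i, x, x.2, hφ i x x.2⟩
  · rw [Submodule.span_le]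
    rintro _ ⟨i, x, hx, rfl⟩
    exact ⟨x, hφ i x hx⟩

end TensorCoeff

theorem stmt7_general {G F A : Type*} [AddCommGroup G] [DecidableEq G]
    [Field F] [Ring A] [Algebra F A]
    (𝒜 : G × G → Submodule F A) [GradedAlgebra 𝒜]
    (σ σh : G → G → Fˣ)
    (hsq : ∀ g h, σh g h * σh g h = σ g h)
    (hhadd₁ : ∀ a b c, σh (a + b) c = σh a c * σh b c)
    (hhadd₂ : ∀ a b c, σh a (b + c) = σh a b * σh a c)
    (mul : (A ⊗[F] AddMonoidAlgebra F G) →ₗ[F] (A ⊗[F] AddMonoidAlgebra F G) →ₗ[F]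
      (A ⊗[F] AddMonoidAlgebra F G))
    (hmul : ∀ (g g' h k h' k' : G) (x y : A), x ∈ 𝒜 (h, k) → y ∈ 𝒜 (h', k') →
      mul (x ⊗ₜ[F] (AddMonoidAlgebra.single g (1 : F)))
          (y ⊗ₜ[F] (AddMonoidAlgebra.single g' (1 : F)))
        = ((σh (h + k) g' * σh g (h' + k') : Fˣ) : F) •
            ((x * y) ⊗ₜ[F] (AddMonoidAlgebra.single (g + g') (1 : F))))
    (mulσ : A →ₗ[F] A →ₗ[F] A)
    (hmulσ : ∀ (g h g' h' : G) (x y : A), x ∈ 𝒜 (g, h) → y ∈ 𝒜 (g', h') →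
      mulσ x y = ((σ g g' * (σ h h')⁻¹ : Fˣ) : F) • (x * y))
    (φ : A →ₗ[F] (A ⊗[F] AddMonoidAlgebra F G))
    (hφ : ∀ (g h : G) (x : A), x ∈ 𝒜 (g, h) →
      φ x = x ⊗ₜ[F] (AddMonoidAlgebra.single (g - h) (1 : F)))
    (A' : Submodule F (A ⊗[F] AddMonoidAlgebra F G))
    (hA' : A' = Submodule.span F {t | ∃ (g h : G) (x : A), x ∈ 𝒜 (g, h) ∧
      t = x ⊗ₜ[F] (AddMonoidAlgebra.single (g - h) (1 : F))}) :
    ((1 : A) ⊗ₜ[F] (AddMonoidAlgebra.single (0 : G) (1 : F)) ∈ A') ∧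
    (∀ a b, a ∈ A' → b ∈ A' → mul a b ∈ A') ∧
    Function.Injective φ ∧
    LinearMap.range φ = A' ∧
    (∀ x y : A, φ (mulσ x y) = mul (φ x) (φ y)) := by
  subst hA'
  have hφ' : ∀ i, ∀ x ∈ 𝒜 i, φ x = x ⊗ₜ AddMonoidAlgebra.single (i.1 - i.2) 1 :=
    fun i => hφ i.1 i.2
  have hσ : ∀ g h g' h' : G,
      σ g g' * (σ h h')⁻¹ = σh (g + h) (g' - h') * σh (g - h) (g' + h') := by
    intro g h g' h'
    rw [bimul_add_sub_mul_sub_add σh hhadd₁ hhadd₂, ← hsq, ← hsq, div_eq_mul_inv, sq, sq]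
  have hφ_mul : ∀ i j, ∀ x ∈ 𝒜 i, ∀ y ∈ 𝒜 j, φ (mulσ x y) = mul (φ x) (φ y) := by
    rintro ⟨g, h⟩ ⟨g', h'⟩ x hx y hy
    rw [hφ g h x hx, hφ g' h' y hy, hmul _ _ _ _ _ _ _ _ hx hy, hmulσ g h g' h' x y hx hy,
      map_smul, hφ (g + g') (h + h') _ (SetLike.mul_mem_graded hx hy), hσ, sub_add_sub_comm]
  refine ⟨Submodule.subset_span ⟨0, 0, 1, SetLike.one_mem_graded 𝒜, by rw [sub_zero]⟩,
    fun a b ha hb => ?_, injective_of_eq_tmul_single 𝒜 hφ', ?_,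
    LinearMap.congr_fun₂ (DirectSum.Decomposition.linearMap_ext₂ (B₁ := mulσ.compr₂ φ)
      (B₂ := mul.compl₁₂ φ φ) 𝒜 𝒜 hφ_mul)⟩
  · refine LinearMap.BilinMap.apply_apply_mem_of_mem_span _ _ _ mul ?_ a b ha hb
    rintro _ ⟨g, h, x, hx, rfl⟩ _ ⟨g', h', y, hy, rfl⟩
    rw [hmul _ _ _ _ _ _ _ _ hx hy, sub_add_sub_comm]
    exact Submodule.smul_mem _ _
      (Submodule.subset_span ⟨g + g', h + h', x * y, SetLike.mul_mem_graded hx hy, rfl⟩)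
  · simp only [range_eq_span_of_eq_tmul_single 𝒜 hφ', Prod.exists]

/-- the bicharacter twist `A_σ` of a `G × G`-graded algebra `A`
is isomorphic, via `φ(x) = x ⊗ e^{g-h}` for `x ∈ A_{g,h}`, to the subalgebra
`A' = ⊕ A_{g,h} ⊗ e^{g-h}` of the crossed product `A ⊗ F[G]`. -/
theorem stmt7 {G F A : Type*} [AddCommGroup G] [DecidableEq G]
    [Field F] [IsAlgClosed F] [Ring A] [Algebra F A]
    (𝒜 : G × G → Submodule F A) [GradedAlgebra 𝒜]
    (σ σh : G → G → Fˣ)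
    (hsq : ∀ g h, σh g h * σh g h = σ g h)
    (hσadd₁ : ∀ a b c, σ (a + b) c = σ a c * σ b c)
    (hσadd₂ : ∀ a b c, σ a (b + c) = σ a b * σ a c)
    (hσskew : ∀ a b, σ a b * σ b a = 1)
    (hσdiag : ∀ a, σ a a = 1)
    (hhadd₁ : ∀ a b c, σh (a + b) c = σh a c * σh b c)
    (hhadd₂ : ∀ a b c, σh a (b + c) = σh a b * σh a c)
    (mul : (A ⊗[F] AddMonoidAlgebra F G) →ₗ[F] (A ⊗[F] AddMonoidAlgebra F G) →ₗ[F]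
      (A ⊗[F] AddMonoidAlgebra F G))
    (hmul : ∀ (g g' h k h' k' : G) (x y : A), x ∈ 𝒜 (h, k) → y ∈ 𝒜 (h', k') →
      mul (x ⊗ₜ[F] (AddMonoidAlgebra.single g (1 : F)))
          (y ⊗ₜ[F] (AddMonoidAlgebra.single g' (1 : F)))
        = ((σh (h + k) g' * σh g (h' + k') : Fˣ) : F) •
            ((x * y) ⊗ₜ[F] (AddMonoidAlgebra.single (g + g') (1 : F))))
    (mulσ : A →ₗ[F] A →ₗ[F] A)
    (hmulσ : ∀ (g h g' h' : G) (x y : A), x ∈ 𝒜 (g, h) → y ∈ 𝒜 (g', h') →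
      mulσ x y = ((σ g g' * (σ h h')⁻¹ : Fˣ) : F) • (x * y))
    (φ : A →ₗ[F] (A ⊗[F] AddMonoidAlgebra F G))
    (hφ : ∀ (g h : G) (x : A), x ∈ 𝒜 (g, h) →
      φ x = x ⊗ₜ[F] (AddMonoidAlgebra.single (g - h) (1 : F)))
    (A' : Submodule F (A ⊗[F] AddMonoidAlgebra F G))
    (hA' : A' = Submodule.span F {t | ∃ (g h : G) (x : A), x ∈ 𝒜 (g, h) ∧
      t = x ⊗ₜ[F] (AddMonoidAlgebra.single (g - h) (1 : F))}) :
    ((1 : A) ⊗ₜ[F] (AddMonoidAlgebra.single (0 : G) (1 : F)) ∈ A') ∧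
    (∀ a b, a ∈ A' → b ∈ A' → mul a b ∈ A') ∧
    Function.Injective φ ∧
    LinearMap.range φ = A' ∧
    (∀ x y : A, φ (mulσ x y) = mul (φ x) (φ y)) :=
  stmt7_general 𝒜 σ σh hsq hhadd₁ hhadd₂ mul hmul mulσ hmulσ φ hφ A' hA'
end

section
/- Let G be an abelian group, K a field, A a G × G-graded associative unital K-algebra, ζ : G × G → K^* a skew bicharacter, and A_ζ the twisted algebra with product x ∘ y = ζ(α,α')ζ(β,β')^{-1} xy for x ∈ A_{α,β}, y ∈ A_{α',β'}. Let M be a G-graded A-module, M = ⊕_{λ∈G} M[λ], such that A_{α,β}·M[λ] ⊆ M[λ + α + β] for all α, β, λ. Then the formula x ·_ζ m = ζ(α − β, λ) ζ(α, β) · (x m), for x ∈ A_{α,β} and m ∈ M[λ], extended bilinearly, defines an A_ζ-module structure on M, i.e. (x ∘ y) ·_ζ m = x ·_ζ (y ·_ζ m) and 1 ·_ζ m = m. -/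
/-!
Both sides of `(x ∘ y) ·_ζ m = x ·_ζ (y ·_ζ m)` are trilinear, so it suffices to compare them on
homogeneous `x ∈ A_{α,β}`, `y ∈ A_{α',β'}`, `m ∈ M[l]`. There both are scalar multiples of
`(x * y) • m`, and expanding the two scalars by bimultiplicativity leaves the same monomials in
`ζ` on each side, except that `ζ(α', β)` on one side meets `ζ(β, α')⁻¹` on the other: this is
where skew-symmetry enters.
-/

open DirectSum

section Bicharacter

variable {G H : Type*} [AddGroup G] [Group H] {ζ : G → G → H}

theorem bichar_zero_left (h : ∀ α β γ, ζ (α + β) γ = ζ α γ * ζ β γ) (γ : G) :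
    ζ 0 γ = 1 := by
  simpa using h 0 0 γ

theorem bichar_sub_left (h : ∀ α β γ, ζ (α + β) γ = ζ α γ * ζ β γ) (α β γ : G) :
    ζ (α - β) γ = ζ α γ * (ζ β γ)⁻¹ := by
  rw [eq_mul_inv_iff_mul_eq, ← h, sub_add_cancel]

end Bicharacter

theorem twist_cocycle {G H : Type*} [AddCommGroup G] [CommGroup H] {ζ : G → G → H}
    (h₁ : ∀ α β γ, ζ (α + β) γ = ζ α γ * ζ β γ)
    (h₂ : ∀ α β γ, ζ α (β + γ) = ζ α β * ζ α γ)
    (hskew : ∀ α β, ζ α β = (ζ β α)⁻¹) (α β α' β' l : G) :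
    ζ α α' * (ζ β β')⁻¹ * (ζ (α + α' - (β + β')) l * ζ (α + α') (β + β')) =
      ζ (α' - β') l * ζ α' β' * (ζ (α - β) (l + α' + β') * ζ α β) := by
  simp only [h₁, h₂, bichar_sub_left h₁, hskew α' β, mul_inv]
  ac_rfl

theorem DirectSum.Decomposition.linearMap_ext {ι R M N σ : Type*} [DecidableEq ι] [Semiring R]
    [AddCommMonoid M] [Module R M] [AddCommMonoid N] [Module R N]
    [SetLike σ M] [AddSubmonoidClass σ M] (ℳ : ι → σ) [Decomposition ℳ]
    {f g : M →ₗ[R] N} (h : ∀ i, ∀ m ∈ ℳ i, f m = g m) : f = g := by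
  ext m
  induction m using Decomposition.inductionOn ℳ with
  | zero => simp only [map_zero]
  | homogeneous m => exact h _ m m.2
  | add m m' hm hm' => rw [map_add, map_add, hm, hm']

section Twist

variable {G K A M : Type*} [AddCommGroup G] [CommRing K] [Ring A] [Algebra K A]
    [AddCommGroup M] [Module K M] [Module A M]
    {𝒜 : G × G → Submodule K A} [SetLike.GradedMonoid 𝒜] {ℳ : G → Submodule K M}
    {ζ : G → G → Kˣ} {mul : A →ₗ[K] A →ₗ[K] A} {act : A →ₗ[K] M →ₗ[K] M}

theorem twistedAct_mul_of_mem
    (hcompat : ∀ (α β l : G) (x : A) (m : M),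
      x ∈ 𝒜 (α, β) → m ∈ ℳ l → x • m ∈ ℳ (l + α + β))
    (h₁ : ∀ α β γ, ζ (α + β) γ = ζ α γ * ζ β γ)
    (h₂ : ∀ α β γ, ζ α (β + γ) = ζ α β * ζ α γ)
    (hskew : ∀ α β, ζ α β = (ζ β α)⁻¹)
    (hmul : ∀ (α β α' β' : G) (x y : A), x ∈ 𝒜 (α, β) → y ∈ 𝒜 (α', β') →
      mul x y = ((ζ α α' * (ζ β β')⁻¹ : Kˣ) : K) • (x * y))
    (hact : ∀ (α β l : G) (x : A) (m : M), x ∈ 𝒜 (α, β) → m ∈ ℳ l →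
      act x m = ((ζ (α - β) l * ζ α β : Kˣ) : K) • (x • m))
    {α β α' β' l : G} {x y : A} {m : M}
    (hx : x ∈ 𝒜 (α, β)) (hy : y ∈ 𝒜 (α', β')) (hm : m ∈ ℳ l) :
    act (mul x y) m = act x (act y m) := by
  have hxy : x * y ∈ 𝒜 (α + α', β + β') := SetLike.mul_mem_graded hx hy
  rw [hmul α β α' β' x y hx hy, map_smul, LinearMap.smul_apply,
    hact _ _ l _ m hxy hm, hact α' β' l y m hy hm, map_smul,
    hact α β _ x _ hx (hcompat α' β' l y m hy hm), mul_smul, smul_smul, smul_smul, smul_smul,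
    ← Units.val_mul, ← Units.val_mul, twist_cocycle h₁ h₂ hskew]

theorem twistedAct_one_of_mem
    (h₁ : ∀ α β γ, ζ (α + β) γ = ζ α γ * ζ β γ)
    (hact : ∀ (α β l : G) (x : A) (m : M), x ∈ 𝒜 (α, β) → m ∈ ℳ l →
      act x m = ((ζ (α - β) l * ζ α β : Kˣ) : K) • (x • m))
    {l : G} {m : M} (hm : m ∈ ℳ l) : act 1 m = m := by
  rw [hact 0 0 l 1 m SetLike.GradedOne.one_mem hm, sub_zero, bichar_zero_left h₁,
    bichar_zero_left h₁, mul_one, Units.val_one, one_smul, one_smul]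

end Twist

theorem stmt16_general {G K A M : Type*} [AddCommGroup G] [DecidableEq G] [Field K]
    [Ring A] [Algebra K A]
    [AddCommGroup M] [Module K M] [Module A M]
    (𝒜 : G × G → Submodule K A) [GradedAlgebra 𝒜]
    (ℳ : G → Submodule K M) [DirectSum.Decomposition ℳ]
    (hcompat : ∀ (α β l : G) (x : A) (m : M),
      x ∈ 𝒜 (α, β) → m ∈ ℳ l → x • m ∈ ℳ (l + α + β))
    (ζ : G → G → Kˣ)
    (hζadd₁ : ∀ α β γ, ζ (α + β) γ = ζ α γ * ζ β γ)
    (hζadd₂ : ∀ α β γ, ζ α (β + γ) = ζ α β * ζ α γ)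
    (hζskew : ∀ α β, ζ α β = (ζ β α)⁻¹)
    (mul : A →ₗ[K] A →ₗ[K] A)
    (hmul : ∀ (α β α' β' : G) (x y : A), x ∈ 𝒜 (α, β) → y ∈ 𝒜 (α', β') →
      mul x y = ((ζ α α' * (ζ β β')⁻¹ : Kˣ) : K) • (x * y))
    (act : A →ₗ[K] M →ₗ[K] M)
    (hact : ∀ (α β l : G) (x : A) (m : M), x ∈ 𝒜 (α, β) → m ∈ ℳ l →
      act x m = ((ζ (α - β) l * ζ α β : Kˣ) : K) • (x • m)) :
    (∀ (x y : A) (m : M), act (mul x y) m = act x (act y m)) ∧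
    (∀ m : M, act 1 m = m) := by
  have hassoc : mul.compr₂ act = (LinearMap.mul K (Module.End K M)).compl₁₂ act act :=
    Decomposition.linearMap_ext 𝒜 fun _ _ hx ↦ Decomposition.linearMap_ext 𝒜 fun _ _ hy ↦
      Decomposition.linearMap_ext ℳ fun _ _ hm ↦
        twistedAct_mul_of_mem hcompat hζadd₁ hζadd₂ hζskew hmul hact hx hy hm
  have hone : act 1 = LinearMap.id :=
    Decomposition.linearMap_ext ℳ fun _ _ hm ↦ twistedAct_one_of_mem hζadd₁ hact hm
  exact ⟨fun x y m ↦ congr($hassoc x y m), fun m ↦ congr($hone m)⟩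

/-- twisting a `G`-graded module over a `G × G`-graded algebra
by a skew bicharacter yields a module over the twisted algebra. -/
theorem stmt16 {G K A M : Type*} [AddCommGroup G] [DecidableEq G] [Field K]
    [Ring A] [Algebra K A]
    [AddCommGroup M] [Module K M] [Module A M]
    [IsScalarTower K A M] [SMulCommClass K A M]
    (𝒜 : G × G → Submodule K A) [GradedAlgebra 𝒜]
    (ℳ : G → Submodule K M) [DirectSum.Decomposition ℳ]
    (hcompat : ∀ (α β l : G) (x : A) (m : M),
      x ∈ 𝒜 (α, β) → m ∈ ℳ l → x • m ∈ ℳ (l + α + β))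
    (ζ : G → G → Kˣ)
    (hζadd₁ : ∀ α β γ, ζ (α + β) γ = ζ α γ * ζ β γ)
    (hζadd₂ : ∀ α β γ, ζ α (β + γ) = ζ α β * ζ α γ)
    (hζskew : ∀ α β, ζ α β = (ζ β α)⁻¹)
    (hζdiag : ∀ α, ζ α α = 1)
    (mul : A →ₗ[K] A →ₗ[K] A)
    (hmul : ∀ (α β α' β' : G) (x y : A), x ∈ 𝒜 (α, β) → y ∈ 𝒜 (α', β') →
      mul x y = ((ζ α α' * (ζ β β')⁻¹ : Kˣ) : K) • (x * y))
    (act : A →ₗ[K] M →ₗ[K] M)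
    (hact : ∀ (α β l : G) (x : A) (m : M), x ∈ 𝒜 (α, β) → m ∈ ℳ l →
      act x m = ((ζ (α - β) l * ζ α β : Kˣ) : K) • (x • m)) :
    (∀ (x y : A) (m : M), act (mul x y) m = act x (act y m)) ∧
    (∀ m : M, act 1 m = m) :=
  stmt16_general 𝒜 ℳ hcompat ζ hζadd₁ hζadd₂ hζskew mul hmul act hact
end

section
/- Let G be an abelian group, F a field, A a G-bigraded bialgebra over F, ζ a skew bicharacter on G, and A_ζ the twisted bialgebra (same Δ, ε, twisted product). Let V and V' be G-graded A-modules with A_{α,β}·V[λ] ⊆ V[λ+α+β] (and similarly for V'), and let V_ζ, V'_ζ, (V⊗V')_ζ be the corresponding twisted A_ζ-modules (with V⊗V' regarded as an A-module via Δ, carrying the grading (V⊗V')[ν] = ⊕_{λ+λ'=ν} V[λ]⊗V'[λ']). Then the map ξ : V ⊗ V' → V ⊗ V' defined by ξ(v ⊗ v') = ζ(λ', λ) v ⊗ v' for v ∈ V[λ], v' ∈ V'[λ'] is an isomorphism of A_ζ-modules from (V ⊗ V')_ζ to V_ζ ⊗ V'_ζ. -/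
/-!
The map `ξ` rescales each component `V[λ] ⊗ V'[λ']` by a unit of `K`, so it is invertible.
For `x ∈ A_{α,β}` the coproduct `Δx` is a sum of terms `x₁ ⊗ x₂` with `x₁ ∈ A_{α,γ}`,
`x₂ ∈ A_{-γ,β}`, and on homogeneous `v ⊗ v'` each such term contributes to both sides of
`ξ (x ·_ζ (v ⊗ v')) = x ·_ζ ξ (v ⊗ v')` the same tensor `x₁ v ⊗ x₂ v'`, with coefficients that
agree by bimultiplicativity, skew-symmetry and `ζ(γ, γ) = 1`.
-/

open TensorProduct

/-- The action of a bialgebra `A` on a tensor product `V ⊗ V'` of two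
`A`-modules (given by their action maps `ρV`, `ρV'`), via the coproduct:
`a · (v ⊗ v') = Σ (a₍₁₎ · v) ⊗ (a₍₂₎ · v')`. -/
noncomputable def tensorAct {K A V V' : Type*} [CommRing K] [Ring A] [Bialgebra K A]
    [AddCommGroup V] [Module K V] [AddCommGroup V'] [Module K V']
    (ρV : A →ₗ[K] V →ₗ[K] V) (ρV' : A →ₗ[K] V' →ₗ[K] V') :
    A →ₗ[K] (V ⊗[K] V') →ₗ[K] (V ⊗[K] V') :=
  (TensorProduct.homTensorHomMap (RingHom.id K) V V' V V') ∘ₗ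
    (TensorProduct.map ρV ρV') ∘ₗ (Coalgebra.comul (R := K))

section Bicharacter
variable {G M : Type*} [AddCommGroup G] [CommGroup M] (ζ : G → G → M)

theorem bichar_neg_left (hζ : ∀ α β γ, ζ (α + β) γ = ζ α γ * ζ β γ) (α β : G) :
    ζ (-α) β = (ζ α β)⁻¹ := by
  have h0 : ζ 0 β = 1 := mul_eq_left.mp (by rw [← hζ 0 0, add_zero])
  exact eq_inv_of_mul_eq_one_left (by rw [← hζ, neg_add_cancel, h0])

-- The two sides are the coefficients of `x₁ v ⊗ x₂ v'` in `ξ (x ·_ζ (v ⊗ v'))` and in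
-- `x ·_ζ ξ (v ⊗ v')`, for `x ∈ A_{α,β}`, a term `x₁ ⊗ x₂ ∈ A_{α,γ} ⊗ A_{-γ,β}` of `Δx`,
-- `v ∈ V[l]` and `v' ∈ V'[l']`.
theorem bichar_twist_identity (hζ₁ : ∀ α β γ, ζ (α + β) γ = ζ α γ * ζ β γ)
    (hζ₂ : ∀ α β γ, ζ α (β + γ) = ζ α β * ζ α γ) (hskew : ∀ α β, ζ α β = (ζ β α)⁻¹)
    (hdiag : ∀ α, ζ α α = 1) (α β γ l l' : G) :
    ζ (α - β) (l + l') * ζ α β * ζ (l' + -γ + β) (l + α + γ)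
      = ζ l' l * ((ζ (α - γ) l * ζ α γ) * (ζ (-γ - β) l' * ζ (-γ) β)) := by
  simp only [sub_eq_add_neg, hζ₁, hζ₂, bichar_neg_left ζ hζ₁, hdiag, inv_one,
    mul_one]
  simp only [hskew l' α, hskew β α, hskew l' γ, hskew γ β, hskew l' l, hskew γ α]
  apply Additive.ofMul.injective
  simp only [ofMul_mul, ofMul_inv]
  abel

end Bicharacter

namespace TensorProduct

variable {ι ι' R V V' P : Type*} [DecidableEq ι] [DecidableEq ι'] [CommSemiring R]
    [AddCommMonoid V] [Module R V] [AddCommMonoid V'] [Module R V'] [AddCommMonoid P] [Module R P]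
    (𝒱 : ι → Submodule R V) [DirectSum.Decomposition 𝒱]
    (𝒱' : ι' → Submodule R V') [DirectSum.Decomposition 𝒱']

theorem ext_homogeneous {f g : V ⊗[R] V' →ₗ[R] P}
    (h : ∀ i i' v v', v ∈ 𝒱 i → v' ∈ 𝒱' i' → f (v ⊗ₜ v') = g (v ⊗ₜ v')) : f = g := by
  refine TensorProduct.ext' fun v v' => ?_
  induction v using DirectSum.Decomposition.inductionOn 𝒱 with
  | zero => simp
  | add a b ha hb => simp only [add_tmul, map_add, ha, hb]
  | homogeneous v =>
    induction v' using DirectSum.Decomposition.inductionOn 𝒱' with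
    | zero => simp
    | add a b ha hb => simp only [tmul_add, map_add, ha, hb]
    | homogeneous v' => exact h _ _ _ _ v.2 v'.2

noncomputable def gradedScale (c : ι → ι' → R) :
    V ⊗[R] V' →ₗ[R] V ⊗[R] V' :=
  DirectSum.toModule R (ι × ι') _ (fun p => c p.1 p.2 • map (𝒱 p.1).subtype (𝒱' p.2).subtype) ∘ₗ
    (TensorProduct.directSum R R (fun i => 𝒱 i) (fun i' => 𝒱' i')).toLinearMap ∘ₗ
    (congr (DirectSum.decomposeLinearEquiv 𝒱) (DirectSum.decomposeLinearEquiv 𝒱')).toLinearMap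

theorem gradedScale_tmul (c : ι → ι' → R) {i : ι} {i' : ι'}
    {v : V} {v' : V'} (hv : v ∈ 𝒱 i) (hv' : v' ∈ 𝒱' i') :
    gradedScale 𝒱 𝒱' c (v ⊗ₜ v') = c i i' • (v ⊗ₜ v') := by
  have h : DirectSum.decompose 𝒱 v = DirectSum.lof R ι (fun i => 𝒱 i) i ⟨v, hv⟩ :=
    DirectSum.decompose_of_mem 𝒱 hv
  have h' : DirectSum.decompose 𝒱' v' = DirectSum.lof R ι' (fun i' => 𝒱' i') i' ⟨v', hv'⟩ :=
    DirectSum.decompose_of_mem 𝒱' hv'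
  simp [gradedScale, DirectSum.decomposeLinearEquiv_apply, h, h']

theorem bijective_of_tmul_eq_units_smul (c : ι → ι' → Rˣ) {f : V ⊗[R] V' →ₗ[R] V ⊗[R] V'}
    (hf : ∀ i i' v v', v ∈ 𝒱 i → v' ∈ 𝒱' i' → f (v ⊗ₜ v') = (c i i' : R) • (v ⊗ₜ v')) :
    Function.Bijective f := by
  let g := gradedScale 𝒱 𝒱' fun i i' => ((c i i')⁻¹ : Rˣ)
  have hgf : g ∘ₗ f = .id := ext_homogeneous 𝒱 𝒱' fun i i' v v' hv hv' => by
    simp [g, hf i i' v v' hv hv', gradedScale_tmul 𝒱 𝒱' _ hv hv', smul_smul]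
  have hfg : f ∘ₗ g = .id := ext_homogeneous 𝒱 𝒱' fun i i' v v' hv hv' => by
    simp [g, hf i i' v v' hv hv', gradedScale_tmul 𝒱 𝒱' _ hv hv', smul_smul]
  exact Function.bijective_iff_has_inverse.mpr
    ⟨g, LinearMap.congr_fun hgf, LinearMap.congr_fun hfg⟩

end TensorProduct

theorem TensorProduct.iSup_range_map_subtype_le_eqLocus {ι R M N P : Type*} [CommSemiring R]
    [AddCommMonoid M] [Module R M] [AddCommMonoid N] [Module R N] [AddCommMonoid P] [Module R P]
    (p : ι → Submodule R M) (q : ι → Submodule R N) {f g : M ⊗[R] N →ₗ[R] P}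
    (h : ∀ i, ∀ x ∈ p i, ∀ y ∈ q i, f (x ⊗ₜ y) = g (x ⊗ₜ y)) :
    ⨆ i, LinearMap.range (map (p i).subtype (q i).subtype) ≤ LinearMap.eqLocus f g :=
  iSup_le fun i => by
    rintro _ ⟨u, rfl⟩
    induction u with
    | zero => simp
    | tmul x y => exact h i x x.2 y y.2
    | add u u' hu hu' => simp_all

theorem apply_tensorAct_tmul_eq_of_comul_mem {ι K A V V' : Type*} [CommRing K] [Ring A]
    [Bialgebra K A] [AddCommGroup V] [Module K V] [AddCommGroup V'] [Module K V']
    (p q : ι → Submodule K A) {x : A}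
    (hx : Coalgebra.comul (R := K) x ∈ ⨆ i, LinearMap.range (map (p i).subtype (q i).subtype))
    (ρ₁ ρ₂ : A →ₗ[K] V →ₗ[K] V) (ρ₁' ρ₂' : A →ₗ[K] V' →ₗ[K] V')
    (φ ψ : V ⊗[K] V' →ₗ[K] V ⊗[K] V') (v : V) (v' : V')
    (h : ∀ i, ∀ x₁ ∈ p i, ∀ x₂ ∈ q i,
      φ (ρ₁ x₁ v ⊗ₜ ρ₁' x₂ v') = ψ (ρ₂ x₁ v ⊗ₜ ρ₂' x₂ v')) :
    φ (tensorAct ρ₁ ρ₁' x (v ⊗ₜ v')) = ψ (tensorAct ρ₂ ρ₂' x (v ⊗ₜ v')) :=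
  iSup_range_map_subtype_le_eqLocus p q
    (f := φ ∘ₗ (homTensorHomMap (RingHom.id K) V V' V V' ∘ₗ map ρ₁ ρ₁').flip (v ⊗ₜ v'))
    (g := ψ ∘ₗ (homTensorHomMap (RingHom.id K) V V' V V' ∘ₗ map ρ₂ ρ₂').flip (v ⊗ₜ v'))
    (fun i x₁ hx₁ x₂ hx₂ => by simpa [homTensorHomMap_apply] using h i x₁ hx₁ x₂ hx₂) hx

theorem stmt18_general {G K A V V' : Type*} [AddCommGroup G] [DecidableEq G] [Field K]
    [Ring A] [Bialgebra K A]
    [AddCommGroup V] [Module K V] [AddCommGroup V'] [Module K V']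
    (𝒜 : G × G → Submodule K A) [GradedAlgebra 𝒜]
    (hΔ : ∀ (α β : G) (x : A), x ∈ 𝒜 (α, β) →
      Coalgebra.comul (R := K) x ∈
        ⨆ γ : G, LinearMap.range
          (TensorProduct.map (𝒜 (α, γ)).subtype (𝒜 (-γ, β)).subtype))
    (𝒱 : G → Submodule K V) [DirectSum.Decomposition 𝒱]
    (𝒱' : G → Submodule K V') [DirectSum.Decomposition 𝒱']
    (ρ : A →ₗ[K] V →ₗ[K] V)
    (ρ' : A →ₗ[K] V' →ₗ[K] V')
    (hgrV : ∀ (α β l : G) (x : A) (v : V),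
      x ∈ 𝒜 (α, β) → v ∈ 𝒱 l → ρ x v ∈ 𝒱 (l + α + β))
    (hgrV' : ∀ (α β l : G) (x : A) (v' : V'),
      x ∈ 𝒜 (α, β) → v' ∈ 𝒱' l → ρ' x v' ∈ 𝒱' (l + α + β))
    (ζ : G → G → Kˣ)
    (hζadd₁ : ∀ α β γ, ζ (α + β) γ = ζ α γ * ζ β γ)
    (hζadd₂ : ∀ α β γ, ζ α (β + γ) = ζ α β * ζ α γ)
    (hζskew : ∀ α β, ζ α β = (ζ β α)⁻¹)
    (hζdiag : ∀ α, ζ α α = 1)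
    (ρζ : A →ₗ[K] V →ₗ[K] V)
    (hρζ : ∀ (α β l : G) (x : A) (v : V), x ∈ 𝒜 (α, β) → v ∈ 𝒱 l →
      ρζ x v = ((ζ (α - β) l * ζ α β : Kˣ) : K) • ρ x v)
    (ρζ' : A →ₗ[K] V' →ₗ[K] V')
    (hρζ' : ∀ (α β l : G) (x : A) (v' : V'), x ∈ 𝒜 (α, β) → v' ∈ 𝒱' l →
      ρζ' x v' = ((ζ (α - β) l * ζ α β : Kˣ) : K) • ρ' x v')
    (actT : A →ₗ[K] (V ⊗[K] V') →ₗ[K] (V ⊗[K] V'))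
    (hactT : ∀ (α β l l' : G) (x : A) (v : V) (v' : V'),
      x ∈ 𝒜 (α, β) → v ∈ 𝒱 l → v' ∈ 𝒱' l' →
      actT x (v ⊗ₜ[K] v')
        = ((ζ (α - β) (l + l') * ζ α β : Kˣ) : K) • (tensorAct ρ ρ' x (v ⊗ₜ[K] v')))
    (ξ : (V ⊗[K] V') →ₗ[K] (V ⊗[K] V'))
    (hξ : ∀ (l l' : G) (v : V) (v' : V'), v ∈ 𝒱 l → v' ∈ 𝒱' l' →
      ξ (v ⊗ₜ[K] v') = ((ζ l' l : Kˣ) : K) • (v ⊗ₜ[K] v')) :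
    Function.Bijective ξ ∧
    ∀ (x : A) (t : V ⊗[K] V'), ξ (actT x t) = tensorAct ρζ ρζ' x (ξ t) := by
  have hsummand : ∀ (α β γ l l' : G) (x₁ x₂ : A) (v : V) (v' : V'), x₁ ∈ 𝒜 (α, γ) →
      x₂ ∈ 𝒜 (-γ, β) → v ∈ 𝒱 l → v' ∈ 𝒱' l' →
      ((ζ (α - β) (l + l') * ζ α β : Kˣ) : K) • ξ (ρ x₁ v ⊗ₜ ρ' x₂ v')
        = (ζ l' l : K) • (ρζ x₁ v ⊗ₜ ρζ' x₂ v') := by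
    intro α β γ l l' x₁ x₂ v v' hx₁ hx₂ hv hv'
    rw [hξ _ _ _ _ (hgrV α γ l x₁ v hx₁ hv) (hgrV' (-γ) β l' x₂ v' hx₂ hv'),
      hρζ α γ l x₁ v hx₁ hv, hρζ' (-γ) β l' x₂ v' hx₂ hv', smul_tmul_smul, smul_smul, smul_smul,
      ← Units.val_mul, ← Units.val_mul, ← Units.val_mul,
      bichar_twist_identity ζ hζadd₁ hζadd₂ hζskew hζdiag]
  refine ⟨bijective_of_tmul_eq_units_smul 𝒱 𝒱' (fun l l' => ζ l' l) hξ, ?_⟩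
  intro x
  induction x using DirectSum.Decomposition.inductionOn 𝒜 with
  | zero => simp only [map_zero, LinearMap.zero_apply, implies_true]
  | add x y hx hy => simp only [map_add, LinearMap.add_apply, hx, hy, implies_true]
  | @homogeneous i x =>
    obtain ⟨α, β⟩ := i
    obtain ⟨x, hx⟩ := x
    suffices ξ ∘ₗ actT x = tensorAct ρζ ρζ' x ∘ₗ ξ from LinearMap.congr_fun this
    refine ext_homogeneous 𝒱 𝒱' fun l l' v v' hv hv' => ?_
    rw [LinearMap.comp_apply, LinearMap.comp_apply, hactT α β l l' x v v' hx hv hv',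
      hξ l l' v v' hv hv', map_smul, map_smul]
    exact apply_tensorAct_tmul_eq_of_comul_mem _ _ (hΔ α β x hx) ρ ρζ ρ' ρζ'
      (((ζ (α - β) (l + l') * ζ α β : Kˣ) : K) • ξ) ((ζ l' l : K) • LinearMap.id) v v'
      fun γ x₁ hx₁ x₂ hx₂ => hsummand α β γ l l' x₁ x₂ v v' hx₁ hx₂ hv hv'

/-- for `G`-graded modules `V`, `V'` over a `G`-bigraded
bialgebra `A`, the map `ξ(v ⊗ v') = ζ(λ',λ) v ⊗ v'` is an isomorphism of
`A_ζ`-modules `(V ⊗ V')_ζ ≅ V_ζ ⊗ V'_ζ`. -/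
theorem stmt18 {G K A V V' : Type*} [AddCommGroup G] [DecidableEq G] [Field K]
    [Ring A] [Bialgebra K A]
    [AddCommGroup V] [Module K V] [AddCommGroup V'] [Module K V']
    (𝒜 : G × G → Submodule K A) [GradedAlgebra 𝒜]
    (hΔ : ∀ (α β : G) (x : A), x ∈ 𝒜 (α, β) →
      Coalgebra.comul (R := K) x ∈
        ⨆ γ : G, LinearMap.range
          (TensorProduct.map (𝒜 (α, γ)).subtype (𝒜 (-γ, β)).subtype))
    (hε : ∀ (α β : G) (x : A), x ∈ 𝒜 (α, β) → α + β ≠ 0 →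
      Coalgebra.counit (R := K) x = 0)
    (𝒱 : G → Submodule K V) [DirectSum.Decomposition 𝒱]
    (𝒱' : G → Submodule K V') [DirectSum.Decomposition 𝒱']
    (ρ : A →ₗ[K] V →ₗ[K] V)
    (hρ1 : ρ 1 = LinearMap.id) (hρm : ∀ a b : A, ρ (a * b) = ρ a ∘ₗ ρ b)
    (ρ' : A →ₗ[K] V' →ₗ[K] V')
    (hρ'1 : ρ' 1 = LinearMap.id) (hρ'm : ∀ a b : A, ρ' (a * b) = ρ' a ∘ₗ ρ' b)
    (hgrV : ∀ (α β l : G) (x : A) (v : V),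
      x ∈ 𝒜 (α, β) → v ∈ 𝒱 l → ρ x v ∈ 𝒱 (l + α + β))
    (hgrV' : ∀ (α β l : G) (x : A) (v' : V'),
      x ∈ 𝒜 (α, β) → v' ∈ 𝒱' l → ρ' x v' ∈ 𝒱' (l + α + β))
    (ζ : G → G → Kˣ)
    (hζadd₁ : ∀ α β γ, ζ (α + β) γ = ζ α γ * ζ β γ)
    (hζadd₂ : ∀ α β γ, ζ α (β + γ) = ζ α β * ζ α γ)
    (hζskew : ∀ α β, ζ α β = (ζ β α)⁻¹)
    (hζdiag : ∀ α, ζ α α = 1)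
    (ρζ : A →ₗ[K] V →ₗ[K] V)
    (hρζ : ∀ (α β l : G) (x : A) (v : V), x ∈ 𝒜 (α, β) → v ∈ 𝒱 l →
      ρζ x v = ((ζ (α - β) l * ζ α β : Kˣ) : K) • ρ x v)
    (ρζ' : A →ₗ[K] V' →ₗ[K] V')
    (hρζ' : ∀ (α β l : G) (x : A) (v' : V'), x ∈ 𝒜 (α, β) → v' ∈ 𝒱' l →
      ρζ' x v' = ((ζ (α - β) l * ζ α β : Kˣ) : K) • ρ' x v')
    (actT : A →ₗ[K] (V ⊗[K] V') →ₗ[K] (V ⊗[K] V'))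
    (hactT : ∀ (α β l l' : G) (x : A) (v : V) (v' : V'),
      x ∈ 𝒜 (α, β) → v ∈ 𝒱 l → v' ∈ 𝒱' l' →
      actT x (v ⊗ₜ[K] v')
        = ((ζ (α - β) (l + l') * ζ α β : Kˣ) : K) • (tensorAct ρ ρ' x (v ⊗ₜ[K] v')))
    (ξ : (V ⊗[K] V') →ₗ[K] (V ⊗[K] V'))
    (hξ : ∀ (l l' : G) (v : V) (v' : V'), v ∈ 𝒱 l → v' ∈ 𝒱' l' →
      ξ (v ⊗ₜ[K] v') = ((ζ l' l : Kˣ) : K) • (v ⊗ₜ[K] v')) :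
    Function.Bijective ξ ∧
    ∀ (x : A) (t : V ⊗[K] V'), ξ (actT x t) = tensorAct ρζ ρζ' x (ξ t) :=
  stmt18_general 𝒜 hΔ 𝒱 𝒱' ρ ρ' hgrV hgrV' ζ hζadd₁ hζadd₂ hζskew hζdiag ρζ hρζ ρζ' hρζ' actT hactT
    ξ hξ
end
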